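/- Let f : F_2^4 → F_2^4 be a permutation with n̂(f) = 0. Then f is weakly APN and n_3(f) = 15, i.e. every nonzero v ∈ F_2^4 gives a component ⟨f, v⟩ of algebraic degree 3. -/
import Mathlib


/-- `F_2^m` as the space of binary vectors of length `m`. -/
abbrev BV (m : ℕ) := Fin m → ZMod 2

/-- The derivative of `f` in direction `a` : `f̂_a(x) = f(x+a) + f(x)`. -/
def der {m : ℕ} (f : BV m → BV m) (a : BV m) : BV m → BV m := fun x => f (x + a) + f x

/-- `f` is weakly APN: `|Im(f̂_a)| > 2^(m-2)` for all `a ≠ 0`. -/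
def WeakAPN {m : ℕ} (f : BV m → BV m) : Prop :=
  ∀ a : BV m, a ≠ 0 → 2 ^ (m - 2) < Nat.card (Set.range (der f a))

/-- Standard dot product over `F_2`; `⟨g, v⟩ = fun x => dotp v (g x)` is the `v`-component. -/
def dotp {m : ℕ} (v w : BV m) : ZMod 2 := ∑ i, v i * w i

/-- `n̂(f)`: the maximum over nonzero `a` of the number of nonzero `v` such that the
component `⟨f̂_a, v⟩` is a constant function. -/
noncomputable def nhat {m : ℕ} (f : BV m → BV m) : ℕ :=
  Finset.sup (Finset.univ.filter fun a : BV m => a ≠ 0) fun a =>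
    Nat.card {v : BV m // v ≠ 0 ∧ ∃ c, ∀ x, dotp v (der f a x) = c}

/-- Algebraic degree of a Boolean function, via its algebraic normal form: the degree is the
maximal size of a monomial `∏_{i ∈ S} x_i` appearing with nonzero (Möbius) coefficient
`∑_{x : supp x ⊆ S} g x` in the unique reduced multilinear polynomial representing `g`. -/
def algDeg {m : ℕ} (g : BV m → ZMod 2) : ℕ :=
  Finset.sup (Finset.univ.filter fun S : Finset (Fin m) =>
    (∑ x ∈ Finset.univ.filter (fun x : BV m => ∀ i, x i ≠ 0 → i ∈ S), g x) ≠ 0)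
    Finset.card

/-- `n_3(f)`: the number of nonzero `v` whose component `⟨f, v⟩` has algebraic degree 3. -/
noncomputable def n3 {m : ℕ} (f : BV m → BV m) : ℕ :=
  Nat.card {v : BV m // v ≠ 0 ∧ algDeg (fun x => dotp v (f x)) = 3}


open Finset

def suppF {m : ℕ} (x : BV m) : Finset (Fin m) := univ.filter fun i => x i ≠ 0

lemma mem_suppF {m : ℕ} {x : BV m} {i : Fin m} : i ∈ suppF x ↔ x i ≠ 0 := by
  simp [suppF]

lemma zmod2_cases : ∀ t : ZMod 2, t = 0 ∨ t = 1 := by decide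

lemma eq_of_suppF_eq {m : ℕ} {x y : BV m} (h : suppF x = suppF y) : x = y := by
  funext i
  rcases zmod2_cases (x i) with hx | hx <;> rcases zmod2_cases (y i) with hy | hy <;>
    try (rw [hx, hy])
  · exfalso; have : i ∈ suppF y := mem_suppF.2 (by rw [hy]; exact one_ne_zero)
    rw [← h] at this; exact (mem_suppF.1 this) hx
  · exfalso; have : i ∈ suppF x := mem_suppF.2 (by rw [hx]; exact one_ne_zero)
    rw [h] at this; exact (mem_suppF.1 this) hy

def coeffF {m : ℕ} (g : BV m → ZMod 2) (S : Finset (Fin m)) : ZMod 2 :=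
  ∑ x ∈ univ.filter (fun x : BV m => suppF x ⊆ S), g x

lemma filter_pred_eq {m : ℕ} (S : Finset (Fin m)) :
    (univ.filter (fun x : BV m => ∀ i, x i ≠ 0 → i ∈ S)) =
      univ.filter (fun x : BV m => suppF x ⊆ S) := by
  apply Finset.filter_congr
  intro x _
  constructor
  · intro hx i hi; exact hx i (mem_suppF.1 hi)
  · intro hx i hi; exact hx (mem_suppF.2 hi)

lemma card_filter_powerset {α : Type*} [DecidableEq α] (U T : Finset α) :
    ((T.powerset).filter fun S => U ⊆ S).card =
      if U ⊆ T then 2 ^ (T.card - U.card) else 0 := by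
  split_ifs with hUT
  · rw [← Finset.card_sdiff_of_subset hUT, ← Finset.card_powerset]
    apply Finset.card_bij (fun S _ => S \ U)
    · intro S hS
      simp only [mem_filter, mem_powerset] at hS ⊢
      exact sdiff_subset_sdiff hS.1 le_rfl
    · intro S hS S' hS' hEq
      simp only [mem_filter, mem_powerset] at hS hS'
      have h1 : S \ U ∪ U = S := Finset.sdiff_union_of_subset hS.2
      have h2 : S' \ U ∪ U = S' := Finset.sdiff_union_of_subset hS'.2
      rw [← h1, ← h2, hEq]
    · intro V hV
      simp only [mem_powerset] at hV
      have hdisj : Disjoint V U := Finset.disjoint_left.2 fun a haV haU =>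
          (Finset.mem_sdiff.1 (hV haV)).2 haU
      refine ⟨V ∪ U, ?_, ?_⟩
      · simp only [mem_filter, mem_powerset]
        exact ⟨Finset.union_subset (hV.trans (Finset.sdiff_subset)) hUT,
          Finset.subset_union_right⟩
      · rw [Finset.union_sdiff_right]
        exact Finset.sdiff_eq_self_of_disjoint hdisj
  · rw [Finset.card_eq_zero]
    apply Finset.filter_eq_empty_iff.2
    intro S hS hUS
    exact hUT (hUS.trans (Finset.mem_powerset.1 hS))

lemma inversion {m : ℕ} (g : BV m → ZMod 2) (x : BV m) :
    ∑ S ∈ (suppF x).powerset, coeffF g S = g x := by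
  unfold coeffF
  rw [Finset.sum_comm' (t' := (Finset.univ : Finset (BV m)))
    (s' := fun y => ((suppF x).powerset).filter (fun S => suppF y ⊆ S))
    (h := fun S y => by
      simp only [mem_filter, mem_powerset, mem_univ, true_and, and_comm])]
  have key : ∀ y : BV m,
      ∑ _S ∈ ((suppF x).powerset).filter (fun S => suppF y ⊆ S), g y =
        if y = x then g x else 0 := by
    intro y
    rw [Finset.sum_const, card_filter_powerset]
    split_ifs with h1 h2 h2
    · subst h2; rw [Nat.sub_self, pow_zero, one_smul]
    · -- suppF y ⊆ suppF x, y ≠ x : 2^(pos) • g y = 0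
      have hne : suppF y ≠ suppF x := fun hEq => h2 (eq_of_suppF_eq hEq)
      have hlt : (suppF y).card < (suppF x).card :=
        Finset.card_lt_card (lt_of_le_of_ne h1 hne)
      obtain ⟨k, hk⟩ : ∃ k, (suppF x).card - (suppF y).card = k + 1 :=
        ⟨(suppF x).card - (suppF y).card - 1, by omega⟩
      rw [hk, pow_succ, mul_comm, nsmul_eq_mul]
      push_cast
      ring_nf
      simp [show ((2:ZMod 2)) = 0 from rfl]
    · subst h2; exact absurd Finset.Subset.rfl h1
    · simp
  rw [Finset.sum_congr rfl (fun y _ => key y)]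
  simp

lemma chi_eq {m : ℕ} (S : Finset (Fin m)) (x : BV m) :
    (∏ i ∈ S, x i) = if S ⊆ suppF x then 1 else 0 := by
  split_ifs with h
  · apply Finset.prod_eq_one
    intro i hi
    rcases zmod2_cases (x i) with h0 | h1
    · exact absurd h0 (mem_suppF.1 (h hi))
    · exact h1
  · obtain ⟨i, hiS, hix⟩ : ∃ i ∈ S, i ∉ suppF x := by
      by_contra hc; push_neg at hc; exact h hc
    exact Finset.prod_eq_zero hiS (by_contra fun hne => hix (mem_suppF.2 hne))

lemma anf {m : ℕ} (g : BV m → ZMod 2) (x : BV m) :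
    g x = ∑ S : Finset (Fin m), coeffF g S * ∏ i ∈ S, x i := by
  have h1 : ∀ S : Finset (Fin m), coeffF g S * ∏ i ∈ S, x i =
      if S ⊆ suppF x then coeffF g S else 0 := by
    intro S; rw [chi_eq]; split_ifs <;> simp
  rw [Finset.sum_congr rfl (fun S _ => h1 S), ← Finset.sum_filter]
  have h2 : Finset.univ.filter (fun S : Finset (Fin m) => S ⊆ suppF x) =
      (suppF x).powerset := by
    ext S; simp [Finset.mem_powerset]
  rw [h2, inversion]

lemma mon3 {m : ℕ} (S : Finset (Fin m)) (hS : S.card ≤ 2) (a b c : BV m) :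
    (∏ i ∈ S, (a+b+c) i) + (∏ i ∈ S, (a+b) i) + (∏ i ∈ S, (a+c) i) +
    (∏ i ∈ S, (b+c) i) + (∏ i ∈ S, a i) + (∏ i ∈ S, b i) + (∏ i ∈ S, c i) +
    (∏ i ∈ S, (0 : BV m) i) = 0 := by
  interval_cases h : S.card
  · simp only [Finset.card_eq_zero] at h
    subst h; simp only [Finset.prod_empty]; decide
  · obtain ⟨i, rfl⟩ := Finset.card_eq_one.1 h
    simp only [Finset.prod_singleton, Pi.add_apply, Pi.zero_apply]
    generalize a i = A; generalize b i = B; generalize c i = C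
    revert A B C; decide
  · obtain ⟨i, j, hij, rfl⟩ := Finset.card_eq_two.1 h
    rw [Finset.prod_pair hij, Finset.prod_pair hij, Finset.prod_pair hij,
      Finset.prod_pair hij, Finset.prod_pair hij, Finset.prod_pair hij,
      Finset.prod_pair hij, Finset.prod_pair hij]
    simp only [Pi.add_apply, Pi.zero_apply]
    generalize a i = A; generalize b i = B; generalize c i = C
    generalize a j = D; generalize b j = E; generalize c j = F
    revert A B C D E F; decide

lemma D3_zero {m : ℕ} (g : BV m → ZMod 2)
    (hdeg : ∀ S : Finset (Fin m), 3 ≤ S.card → coeffF g S = 0) (a b c : BV m) :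
    g (a+b+c) + g (a+b) + g (a+c) + g (b+c) + g a + g b + g c + g 0 = 0 := by
  rw [anf g (a+b+c), anf g (a+b), anf g (a+c), anf g (b+c), anf g a, anf g b,
    anf g c, anf g 0]
  rw [← Finset.sum_add_distrib, ← Finset.sum_add_distrib, ← Finset.sum_add_distrib,
    ← Finset.sum_add_distrib, ← Finset.sum_add_distrib, ← Finset.sum_add_distrib,
    ← Finset.sum_add_distrib]
  apply Finset.sum_eq_zero
  intro S _
  by_cases hS : S.card ≤ 2
  · have h0 := mon3 S hS a b c
    linear_combination (coeffF g S) * h0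
  · rw [hdeg S (by omega)]; ring

-- ===== further auxiliary lemmas =====

lemma addself : ∀ t : ZMod 2, t + t = 0 := by decide

lemma zadd_eq : ∀ s t : ZMod 2, s + t = 0 → s = t := by decide

lemma coeff_zero_of_algDeg_le {m : ℕ} {g : BV m → ZMod 2} {d : ℕ} (h : algDeg g ≤ d)
    {S : Finset (Fin m)} (hS : d < S.card) : coeffF g S = 0 := by
  by_contra hne
  have hmem : S ∈ Finset.univ.filter (fun S : Finset (Fin m) =>
      (∑ x ∈ Finset.univ.filter (fun x : BV m => ∀ i, x i ≠ 0 → i ∈ S), g x) ≠ 0) := by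
    rw [Finset.mem_filter]
    refine ⟨Finset.mem_univ _, ?_⟩
    rw [filter_pred_eq]
    exact hne
  have h2 : S.card ≤ algDeg g := Finset.le_sup (f := Finset.card) hmem
  omega

lemma algDeg_le_of_coeff {m : ℕ} {g : BV m → ZMod 2} {d : ℕ}
    (h : ∀ S : Finset (Fin m), d < S.card → coeffF g S = 0) : algDeg g ≤ d := by
  apply Finset.sup_le
  intro S hS
  rw [Finset.mem_filter] at hS
  by_contra hgt
  have h2 := hS.2
  rw [filter_pred_eq] at h2
  exact h2 (h S (by omega))

lemma dotp_add_right {m : ℕ} (v w1 w2 : BV m) :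
    dotp v (w1 + w2) = dotp v w1 + dotp v w2 := by
  simp [dotp, Pi.add_apply, mul_add, Finset.sum_add_distrib]

lemma dotp_add_left {m : ℕ} (v1 v2 w : BV m) :
    dotp (v1 + v2) w = dotp v1 w + dotp v2 w := by
  simp [dotp, Pi.add_apply, add_mul, Finset.sum_add_distrib]

lemma dotp_zero_right {m : ℕ} (v : BV m) : dotp v 0 = 0 := by simp [dotp]

lemma dotp_single {m : ℕ} (v : BV m) (i : Fin m) :
    dotp v (fun j => if j = i then 1 else 0) = v i := by
  simp [dotp, mul_ite]

def chiZ (t : ZMod 2) : ℤ := 1 - 2 * t.val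

lemma chiZ_mul : ∀ s t : ZMod 2, chiZ s * chiZ t = chiZ (s + t) := by decide

lemma chiZ_zero : chiZ 0 = 1 := by decide

lemma chiZ_add_one : ∀ t : ZMod 2, chiZ (t + 1) = - chiZ t := by decide

lemma sum_chiZ_zero {m : ℕ} (h : BV m → ZMod 2) (x0 : BV m)
    (hx0 : ∀ x, h (x + x0) = h x + 1) : ∑ x : BV m, chiZ (h x) = 0 := by
  have h1 : ∑ x : BV m, chiZ (h (x + x0)) = ∑ x : BV m, chiZ (h x) :=
    Fintype.sum_equiv (Equiv.addRight x0) _ _ (fun x => rfl)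
  have h2 : ∑ x : BV m, chiZ (h (x + x0)) = - ∑ x : BV m, chiZ (h x) := by
    simp only [hx0, chiZ_add_one, Finset.sum_neg_distrib]
  have := h1.symm.trans h2
  linarith

lemma balanced {m : ℕ} {v : BV m} (hv : v ≠ 0) : ∑ y : BV m, chiZ (dotp v y) = 0 := by
  obtain ⟨i, hi⟩ := Function.ne_iff.1 hv
  have hvi : v i = 1 := by
    rcases zmod2_cases (v i) with h | h
    · exact absurd h hi
    · exact h
  apply sum_chiZ_zero _ (fun j => if j = i then 1 else 0)
  intro y
  rw [dotp_add_right, dotp_single, hvi]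

lemma sum_sq {m : ℕ} (g : BV m → ZMod 2) :
    (∑ x : BV m, chiZ (g x)) * (∑ y : BV m, chiZ (g y)) =
      ∑ a : BV m, ∑ x : BV m, chiZ (g (x + a) + g x) := by
  rw [Finset.sum_mul_sum]
  have h1 : ∀ x : BV m, ∑ y : BV m, chiZ (g x) * chiZ (g y) =
      ∑ a : BV m, chiZ (g (x + a) + g x) := by
    intro x
    have e1 : ∀ y : BV m, chiZ (g x) * chiZ (g y) = chiZ (g y + g x) := by
      intro y; rw [chiZ_mul, add_comm]
    rw [Finset.sum_congr rfl (fun y _ => e1 y)]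
    exact (Fintype.sum_equiv (Equiv.addLeft x) (fun a => chiZ (g (x + a) + g x))
      (fun y => chiZ (g y + g x)) (fun a => rfl)).symm
  rw [Finset.sum_congr rfl (fun x _ => h1 x), Finset.sum_comm]

lemma key_lemma (f : BV 4 → BV 4) (hperm : Function.Bijective f)
    (hnh : ∀ a : BV 4, a ≠ 0 → ∀ v : BV 4, v ≠ 0 → ¬ ∃ c, ∀ x, dotp v (der f a x) = c)
    (v : BV 4) (hv : v ≠ 0) : algDeg (fun x => dotp v (f x)) = 3 := by
  set g : BV 4 → ZMod 2 := fun x => dotp v (f x) with hg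
  have hcuniv : coeffF g Finset.univ = 0 := by
    have hfil : Finset.univ.filter (fun x : BV 4 => suppF x ⊆ Finset.univ) =
        Finset.univ := Finset.filter_true_of_mem (fun x _ => Finset.subset_univ _)
    unfold coeffF
    rw [hfil]
    have e1 : ∑ x : BV 4, g x = ∑ y : BV 4, dotp v y :=
      hperm.sum_comp (fun y => dotp v y)
    rw [e1]
    unfold dotp
    rw [Finset.sum_comm]
    have hz : ∀ i : Fin 4, ∑ y : BV 4, y i = 0 := by decide
    apply Finset.sum_eq_zero
    intro i _
    rw [← Finset.mul_sum, hz i, mul_zero]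
  have hle3 : algDeg g ≤ 3 := by
    apply algDeg_le_of_coeff
    intro S hS
    have h4 : S.card ≤ 4 := by
      have := Finset.card_le_univ S
      simpa using this
    have hSu : S = Finset.univ := (Finset.card_eq_iff_eq_univ S).1 (by simp; omega)
    rw [hSu]
    exact hcuniv
  by_contra hne
  have hle2 : algDeg g ≤ 2 := by omega
  have hdeg : ∀ S : Finset (Fin 4), 3 ≤ S.card → coeffF g S = 0 :=
    fun S hS => coeff_zero_of_algDeg_le hle2 (by omega)
  have hW : ∑ x : BV 4, chiZ (g x) = 0 := by
    have e1 : ∑ x : BV 4, chiZ (g x) = ∑ y : BV 4, chiZ (dotp v y) :=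
      hperm.sum_comp (fun y => chiZ (dotp v y))
    rw [e1]
    exact balanced hv
  have hinner : ∀ a : BV 4, a ≠ 0 → ∑ x : BV 4, chiZ (g (x + a) + g x) = 0 := by
    intro a ha
    by_cases hca : ∀ x : BV 4, g (x + a) + g x + g a + g 0 = 0
    · exfalso
      apply hnh a ha v hv
      refine ⟨g a + g 0, fun x => ?_⟩
      have hd : dotp v (der f a x) = g (x + a) + g x := by
        show dotp v (f (x + a) + f x) = _
        rw [dotp_add_right]
      rw [hd]
      have h0 := hca x
      revert h0
      generalize g (x + a) = A
      generalize g x = B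
      generalize g a = C
      generalize g 0 = D
      revert A B C D
      decide
    · push_neg at hca
      obtain ⟨x1, hx1⟩ := hca
      have hx1' : g (x1 + a) + g x1 + g a + g 0 = 1 := by
        rcases zmod2_cases (g (x1 + a) + g x1 + g a + g 0) with h | h
        · exact absurd h hx1
        · exact h
      apply sum_chiZ_zero (fun x => g (x + a) + g x) x1
      intro x
      have h0 := D3_zero g hdeg x x1 a
      show g (x + x1 + a) + g (x + x1) = g (x + a) + g x + 1
      revert h0 hx1'
      generalize g (x + x1 + a) = A
      generalize g (x + x1) = B
      generalize g (x + a) = C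
      generalize g (x1 + a) = E
      generalize g x = D
      generalize g x1 = F
      generalize g a = G
      generalize g 0 = H
      revert A B C D E F G H
      decide
  have hsq := sum_sq g
  rw [hW] at hsq
  have hR : ∑ a : BV 4, ∑ x : BV 4, chiZ (g (x + a) + g x) = 16 := by
    rw [Finset.sum_eq_single_of_mem 0 (Finset.mem_univ 0) (fun a _ ha => hinner a ha)]
    have e2 : ∀ x : BV 4, chiZ (g (x + 0) + g x) = 1 := by
      intro x
      rw [add_zero, addself, chiZ_zero]
    rw [Finset.sum_congr rfl (fun x _ => e2 x)]
    simp
  rw [hR] at hsq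
  norm_num at hsq

/-- A permutation `f` of `F_2^4` with `n̂(f) = 0` is weakly APN and has `n_3(f) = 15`,
i.e. every nonzero `v` gives a component `⟨f, v⟩` of algebraic degree 3. -/
theorem stmt_18 (f : BV 4 → BV 4) (hperm : Function.Bijective f) (h : nhat f = 0) :
    WeakAPN f ∧ n3 f = 15 := by
  have hnh : ∀ a : BV 4, a ≠ 0 → ∀ v : BV 4, v ≠ 0 →
      ¬ ∃ c, ∀ x, dotp v (der f a x) = c := by
    intro a ha v hv hc
    have h0 : Nat.card {v : BV 4 // v ≠ 0 ∧ ∃ c, ∀ x, dotp v (der f a x) = c} = 0 := by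
      unfold nhat at h
      have h2 : ∀ b ∈ Finset.univ.filter (fun a : BV 4 => a ≠ 0),
          Nat.card {v : BV 4 // v ≠ 0 ∧ ∃ c, ∀ x, dotp v (der f b x) = c} = 0 := by
        simpa [Finset.sup_eq_bot_iff] using h
      exact h2 a (Finset.mem_filter.2 ⟨Finset.mem_univ _, ha⟩)
    have hne : Nonempty {v : BV 4 // v ≠ 0 ∧ ∃ c, ∀ x, dotp v (der f a x) = c} :=
      ⟨⟨v, hv, hc⟩⟩
    have hpos := Nat.card_pos (α := {v : BV 4 // v ≠ 0 ∧ ∃ c, ∀ x, dotp v (der f a x) = c})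
    omega
  constructor
  · intro a ha
    by_contra hle
    push_neg at hle
    have hT : Set.range (der f a) = ↑(Finset.univ.image (der f a)) := by
      rw [← Set.image_univ, Finset.coe_image, Finset.coe_univ]
    set T := Finset.univ.image (der f a) with hTdef
    rw [hT] at hle
    have ecard : Nat.card (↑(↑T : Set (BV 4))) = T.card := Nat.card_eq_finsetCard _
    rw [ecard] at hle
    have hcard : T.card ≤ 4 := le_trans hle (by norm_num)
    have hmemT : ∀ x : BV 4, der f a x ∈ T := fun x =>
      Finset.mem_image.2 ⟨x, Finset.mem_univ x, rfl⟩
    set l := T.toList with hldef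
    have hlen : l.length ≤ 4 := by rw [hldef, Finset.length_toList]; exact hcard
    set y0 : BV 4 := der f a 0 with hy0
    have hyl : ∀ z ∈ T, ∃ k, k < 4 ∧ l.getD k y0 = z := by
      intro z hz
      have hzl : z ∈ l := by rw [hldef]; exact Finset.mem_toList.2 hz
      obtain ⟨n, hn, hget⟩ := List.mem_iff_getElem.1 hzl
      exact ⟨n, by omega, by rw [List.getD_eq_getElem l y0 hn]; exact hget⟩
    obtain ⟨v1, v2, hne12, heq⟩ := Fintype.exists_ne_map_eq_of_card_lt
      (fun w : BV 4 => (dotp w (l.getD 1 y0 + l.getD 0 y0),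
        dotp w (l.getD 2 y0 + l.getD 0 y0), dotp w (l.getD 3 y0 + l.getD 0 y0)))
      (by simp)
    set v : BV 4 := v1 + v2 with hvdef
    have hv : v ≠ 0 := by
      intro h0
      apply hne12
      funext i
      have h1 := congrFun (hvdef.symm.trans h0) i
      exact zadd_eq (v1 i) (v2 i) h1
    simp only [Prod.mk.injEq] at heq
    obtain ⟨h1, h2, h3⟩ := heq
    have hdv : ∀ k, k < 4 → dotp v (l.getD k y0 + l.getD 0 y0) = 0 := by
      intro k hk
      interval_cases k
      · have e0 : l.getD 0 y0 + l.getD 0 y0 = 0 := by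
          funext i
          exact addself _
        rw [e0, dotp_zero_right]
      · rw [hvdef, dotp_add_left, h1, addself]
      · rw [hvdef, dotp_add_left, h2, addself]
      · rw [hvdef, dotp_add_left, h3, addself]
    apply hnh a ha v hv
    refine ⟨dotp v (l.getD 0 y0), fun x => ?_⟩
    obtain ⟨k, hk, hkz⟩ := hyl (der f a x) (hmemT x)
    rw [← hkz]
    have hsplit : l.getD k y0 = l.getD 0 y0 + (l.getD k y0 + l.getD 0 y0) := by
      funext i
      simp only [Pi.add_apply]
      generalize (l.getD 0 y0) i = s
      generalize (l.getD k y0) i = t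
      revert s t
      decide
    calc dotp v (l.getD k y0)
        = dotp v (l.getD 0 y0 + (l.getD k y0 + l.getD 0 y0)) := by rw [← hsplit]
      _ = dotp v (l.getD 0 y0) + dotp v (l.getD k y0 + l.getD 0 y0) :=
          dotp_add_right _ _ _
      _ = dotp v (l.getD 0 y0) := by rw [hdv k hk, add_zero]
  · unfold n3
    have hall : ∀ w : BV 4, (w ≠ 0 ∧ algDeg (fun x => dotp w (f x)) = 3) ↔ w ≠ 0 :=
      fun w => ⟨fun hx => hx.1, fun hx => ⟨hx, key_lemma f hperm hnh w hx⟩⟩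
    rw [Nat.card_congr (Equiv.subtypeEquivRight hall), Nat.card_eq_fintype_card,
      Fintype.card_subtype_compl, Fintype.card_subtype_eq]
    simp
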